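/- For a linear system ẋ = Ax + Bu, y = Cx, the IOS property (existence of β ∈ KL, γ ∈ K with |y(t,ξ,u)| ≤ β(|ξ|,t) + γ(‖u‖) for all trajectories) holds if and only if it holds for the zero input u ≡ 0, i.e., if and only if Ce^{tA}ξ → 0 uniformly on bounded sets of initial states with a KL bound. -/

import Mathlib

open Set Filter

/-- A function of class `K`: continuous and strictly increasing on `[0,∞)` with `γ 0 = 0`. -/
def ClassK (γ : ℝ → ℝ) : Prop :=
  ContinuousOn γ (Ici 0) ∧ StrictMonoOn γ (Ici 0) ∧ γ 0 = 0

/-- A function of class `K∞`: class `K` and unbounded. -/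
def ClassKInfty (γ : ℝ → ℝ) : Prop :=
  ClassK γ ∧ Tendsto γ atTop atTop

/-- A function of class `KL`: class `K` in the first argument for each fixed `t ≥ 0`;
continuous, decreasing and converging to `0` in the second argument for each fixed `r ≥ 0`. -/
def ClassKL (β : ℝ → ℝ → ℝ) : Prop :=
  (∀ t ∈ Ici (0:ℝ), ClassK (fun r => β r t)) ∧
  (∀ r ∈ Ici (0:ℝ), ContinuousOn (β r) (Ici 0) ∧ AntitoneOn (β r) (Ici 0) ∧
    Tendsto (β r) atTop (nhds 0))

/-- An input is (globally) bounded. -/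
def IsBddInput {m : ℕ} (u : ℝ → EuclideanSpace ℝ (Fin m)) : Prop :=
  ∃ C, ∀ t : ℝ, ‖u t‖ ≤ C

/-- The sup norm `‖u‖∞` of an input. -/
noncomputable def unorm {m : ℕ} (u : ℝ → EuclideanSpace ℝ (Fin m)) : ℝ :=
  ⨆ t : ℝ, ‖u t‖

/-- The output of the linear system `ẋ = Ax + Bu`, `y = Cx`, given by the variation of
parameters formula `y(t,ξ,u) = C e^{tA} ξ + ∫₀ᵗ C e^{(t−s)A} B u(s) ds`. -/
noncomputable def linOut {n m p : ℕ}
    (A : EuclideanSpace ℝ (Fin n) →L[ℝ] EuclideanSpace ℝ (Fin n))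
    (B : EuclideanSpace ℝ (Fin m) →L[ℝ] EuclideanSpace ℝ (Fin n))
    (C : EuclideanSpace ℝ (Fin n) →L[ℝ] EuclideanSpace ℝ (Fin p))
    (t : ℝ) (ξ : EuclideanSpace ℝ (Fin n)) (u : ℝ → EuclideanSpace ℝ (Fin m)) :
    EuclideanSpace ℝ (Fin p) :=
  C (NormedSpace.exp (t • A) ξ) +
    ∫ s in (0:ℝ)..t, C (NormedSpace.exp ((t - s) • A) (B (u s)))

/-!
A `KL` bound on the free output `C e^{tA} ξ` forces `‖C e^{tA}‖ → 0`. Every operator `L` in the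
span `V` of the orbit `{C e^{tA}}` then also satisfies `L e^{sA} → 0`, since
`C e^{(τ+s)A} = (C e^{τA}) e^{sA}`. As `V` is finite-dimensional, this pointwise convergence is
uniform on the unit sphere of `V`, so right composition with `e^{TA}` halves norms on `V` for some
`T > 0`. Iterating gives `‖C e^{tA}‖ ≤ M e^{-at}`, and the variation of parameters formula then
yields the `IOS` estimate `|y| ≤ M e^{-at} |ξ| + (M ‖B‖ / a) ‖u‖`.
-/

open Topology

theorem ContinuousLinearMap.tendsto_nhds_of_tendsto_apply {𝕜 E F α : Type*}
    [NontriviallyNormedField 𝕜] [CompleteSpace 𝕜]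
    [NormedAddCommGroup E] [NormedSpace 𝕜 E] [FiniteDimensional 𝕜 E]
    [NormedAddCommGroup F] [NormedSpace 𝕜 F] {l : Filter α} {f : α → E →L[𝕜] F}
    {g : E →L[𝕜] F} (h : ∀ x, Tendsto (f · x) l (𝓝 (g x))) : Tendsto f l (𝓝 g) := by
  let e : (E →L[𝕜] F) ≃L[𝕜] Fin (Module.finrank 𝕜 E) → F :=
    ((ContinuousLinearEquiv.ofFinrankEq (Module.finrank_fin_fun 𝕜).symm).arrowCongr
      (1 : F ≃L[𝕜] F)).trans (ContinuousLinearEquiv.piRing _)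
  rw [e.toHomeomorph.isInducing.tendsto_nhds_iff]
  exact tendsto_pi_nhds.mpr fun i ↦ h _

theorem Submodule.eventually_norm_apply_le_of_tendsto {𝕜 E F α : Type*}
    [NontriviallyNormedField 𝕜] [CompleteSpace 𝕜]
    [NormedAddCommGroup E] [NormedSpace 𝕜 E] [NormedAddCommGroup F] [NormedSpace 𝕜 F]
    (V : Submodule 𝕜 E) [FiniteDimensional 𝕜 V] {l : Filter α} {T : α → E →L[𝕜] F}
    (h : ∀ v ∈ V, Tendsto (fun a ↦ T a v) l (𝓝 0)) {ε : ℝ} (hε : 0 < ε) :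
    ∀ᶠ a in l, ∀ v ∈ V, ‖T a v‖ ≤ ε * ‖v‖ := by
  have hT : Tendsto (fun a ↦ (T a).comp V.subtypeL) l (𝓝 0) :=
    ContinuousLinearMap.tendsto_nhds_of_tendsto_apply fun v ↦ h v v.2
  filter_upwards [hT.norm.eventually (ge_mem_nhds (by simpa using hε))] with a ha v hv
  simpa using ((T a).comp V.subtypeL).le_of_opNorm_le ha ⟨v, hv⟩

theorem le_two_mul_exp_of_halving {φ : ℝ → ℝ} {T M t : ℝ} (hT : 0 < T) (hM : 0 ≤ M)
    (hbound : ∀ s ∈ Ico 0 T, φ s ≤ M) (hhalf : ∀ s, 0 ≤ s → φ (s + T) ≤ φ s / 2)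
    (ht : 0 ≤ t) : φ t ≤ 2 * M * Real.exp (-(Real.log 2 / T * t)) := by
  have hstep : ∀ k : ℕ, ∀ s ∈ Ico (k * T) ((k + 1) * T), φ s ≤ M / 2 ^ k := by
    intro k
    induction k with
    | zero => simpa using hbound
    | succ k ih =>
      intro s ⟨hs₁, hs₂⟩
      push_cast at hs₁ hs₂
      have hprev := ih (s - T) ⟨by linarith, by linarith⟩
      calc φ s = φ (s - T + T) := by rw [sub_add_cancel]
        _ ≤ φ (s - T) / 2 := hhalf _ (by nlinarith [Nat.cast_nonneg (α := ℝ) k])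
        _ ≤ M / 2 ^ (k + 1) := by rw [pow_succ, ← div_div]; gcongr
  set k := ⌊t / T⌋₊
  have hk : t / T < k + 1 := Nat.lt_floor_add_one _
  have hφ : φ t ≤ M / 2 ^ k := hstep k t
    ⟨(le_div_iff₀ hT).mp (Nat.floor_le (div_nonneg ht hT.le)), (div_lt_iff₀ hT).mp hk⟩
  have hexp : (1 : ℝ) / 2 ^ k ≤ 2 * Real.exp (-(Real.log 2 / T * t)) := by
    have hlog : Real.log 2 / T * t = Real.log 2 * (t / T) := by ring
    have hle : -(k * Real.log 2) ≤ Real.log 2 + -(Real.log 2 / T * t) := by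
      nlinarith [Real.log_pos one_lt_two]
    calc (1 : ℝ) / 2 ^ k = Real.exp (-(k * Real.log 2)) := by
          rw [Real.exp_neg, Real.exp_nat_mul, Real.exp_log two_pos, one_div]
      _ ≤ Real.exp (Real.log 2 + -(Real.log 2 / T * t)) := Real.exp_le_exp.mpr hle
      _ = _ := by rw [Real.exp_add, Real.exp_log two_pos]
  calc φ t ≤ M / 2 ^ k := hφ
    _ = M * (1 / 2 ^ k) := by ring
    _ ≤ M * (2 * Real.exp (-(Real.log 2 / T * t))) := by gcongr
    _ = _ := by ring

theorem NormedSpace.exp_add_smul {𝔸 : Type*} [NormedRing 𝔸] [NormedAlgebra ℝ 𝔸] [CompleteSpace 𝔸]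
    (x : 𝔸) (s t : ℝ) :
    NormedSpace.exp ((s + t) • x) = NormedSpace.exp (s • x) * NormedSpace.exp (t • x) := by
  let +nondep : NormedAlgebra ℚ 𝔸 := .restrictScalars ℚ ℝ 𝔸
  rw [add_smul, NormedSpace.exp_add_of_commute (((Commute.refl x).smul_left s).smul_right t)]

section Semigroup

variable {E F : Type*} [NormedAddCommGroup E] [NormedSpace ℝ E]
  [NormedAddCommGroup F] [NormedSpace ℝ F]

theorem comp_exp_add_smul [CompleteSpace E] (A : E →L[ℝ] E) (C : E →L[ℝ] F) (s t : ℝ) :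
    C.comp (NormedSpace.exp ((s + t) • A)) =
      (C.comp (NormedSpace.exp (s • A))).comp (NormedSpace.exp (t • A)) := by
  rw [NormedSpace.exp_add_smul A s t, ContinuousLinearMap.mul_def, ContinuousLinearMap.comp_assoc]

theorem tendsto_comp_exp_of_mem_span [CompleteSpace E] {A : E →L[ℝ] E} {C : E →L[ℝ] F}
    (h : Tendsto (fun t : ℝ ↦ C.comp (NormedSpace.exp (t • A))) atTop (𝓝 0)) {L : E →L[ℝ] F}
    (hL : L ∈ Submodule.span ℝ (range fun t : ℝ ↦ C.comp (NormedSpace.exp (t • A)))) :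
    Tendsto (fun t : ℝ ↦ L.comp (NormedSpace.exp (t • A))) atTop (𝓝 0) := by
  induction hL using Submodule.span_induction with
  | mem L hL =>
    obtain ⟨s, rfl⟩ := hL
    simpa only [Function.comp_def, id, comp_exp_add_smul] using
      h.comp (tendsto_atTop_add_const_left _ s tendsto_id)
  | zero => simp
  | add L L' _ _ ih ih' => simpa [ContinuousLinearMap.add_comp] using ih.add ih'
  | smul c L _ ih => simpa [ContinuousLinearMap.smul_comp] using ih.const_smul c

variable [FiniteDimensional ℝ E]

theorem exists_norm_comp_exp_add_le_half {A : E →L[ℝ] E} {C : E →L[ℝ] F}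
    (h : Tendsto (fun t : ℝ ↦ C.comp (NormedSpace.exp (t • A))) atTop (𝓝 0)) :
    ∃ T : ℝ, 0 < T ∧ ∀ t : ℝ, ‖C.comp (NormedSpace.exp ((t + T) • A))‖ ≤
      ‖C.comp (NormedSpace.exp (t • A))‖ / 2 := by
  set V := Submodule.span ℝ (range fun t : ℝ ↦ C.comp (NormedSpace.exp (t • A)))
  have : FiniteDimensional ℝ V := by
    refine Submodule.finiteDimensional_of_le (S₂ := LinearMap.range
      (ContinuousLinearMap.compL ℝ E E F C : (E →L[ℝ] E) →ₗ[ℝ] _)) (Submodule.span_le.mpr ?_)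
    rintro _ ⟨t, rfl⟩
    exact ⟨NormedSpace.exp (t • A), rfl⟩
  have hdecay : ∀ L ∈ V, Tendsto (fun s : ℝ ↦
      (ContinuousLinearMap.compL ℝ E E F).flip (NormedSpace.exp (s • A)) L) atTop (𝓝 0) :=
    fun L hL ↦ tendsto_comp_exp_of_mem_span h hL
  obtain ⟨T, hT, hhalf⟩ := ((eventually_gt_atTop (0 : ℝ)).and
    (V.eventually_norm_apply_le_of_tendsto hdecay one_half_pos)).exists
  refine ⟨T, hT, fun t ↦ ?_⟩
  calc ‖C.comp (NormedSpace.exp ((t + T) • A))‖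
      = ‖(ContinuousLinearMap.compL ℝ E E F).flip (NormedSpace.exp (T • A))
          (C.comp (NormedSpace.exp (t • A)))‖ := by rw [comp_exp_add_smul]; rfl
    _ ≤ 1 / 2 * ‖C.comp (NormedSpace.exp (t • A))‖ := hhalf _ (Submodule.subset_span ⟨t, rfl⟩)
    _ = _ := by ring

theorem exists_norm_comp_exp_le_exp {A : E →L[ℝ] E} {C : E →L[ℝ] F}
    (h : Tendsto (fun t : ℝ ↦ C.comp (NormedSpace.exp (t • A))) atTop (𝓝 0)) :
    ∃ M a : ℝ, 0 < M ∧ 0 < a ∧ ∀ t, 0 ≤ t →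
      ‖C.comp (NormedSpace.exp (t • A))‖ ≤ M * Real.exp (-(a * t)) := by
  obtain ⟨T, hT, hhalf⟩ := exists_norm_comp_exp_add_le_half h
  have hcont : Continuous fun t : ℝ ↦ C.comp (NormedSpace.exp (t • A)) :=
    continuous_const.clm_comp (differentiable_exp_smul_const ℝ A).continuous
  obtain ⟨K, hK⟩ := (isCompact_Icc (a := 0) (b := T)).exists_bound_of_continuousOn
    hcont.norm.continuousOn
  have hK₀ : 0 ≤ K := (norm_nonneg _).trans (hK 0 ⟨le_rfl, hT.le⟩)
  refine ⟨2 * (K + 1), Real.log 2 / T, by positivity, div_pos (Real.log_pos one_lt_two) hT,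
    fun t ht ↦ le_two_mul_exp_of_halving
      (φ := fun t ↦ ‖C.comp (NormedSpace.exp (t • A))‖) hT (by positivity) (fun s hs ↦ ?_)
      (fun s _ ↦ hhalf s) ht⟩
  simpa using (hK s (Ico_subset_Icc_self hs)).trans (le_add_of_nonneg_right zero_le_one)

end Semigroup

theorem ClassKL.nonneg {β : ℝ → ℝ → ℝ} (hβ : ClassKL β) {r t : ℝ} (hr : 0 ≤ r) (ht : 0 ≤ t) :
    0 ≤ β r t := by
  obtain ⟨-, hmono, hzero⟩ := hβ.1 t ht
  simpa [hzero] using hmono.monotoneOn self_mem_Ici hr hr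

theorem classK_const_mul {c : ℝ} (hc : 0 < c) : ClassK (c * ·) :=
  ⟨(continuous_const_mul c).continuousOn, fun _ _ _ _ h ↦ mul_lt_mul_of_pos_left h hc,
    mul_zero c⟩

theorem classKL_mul_exp {M a : ℝ} (hM : 0 < M) (ha : 0 < a) :
    ClassKL fun r t ↦ M * Real.exp (-(a * t)) * r := by
  refine ⟨fun t _ ↦ classK_const_mul (by positivity), fun r hr ↦ ⟨by fun_prop, ?_, ?_⟩⟩
  · intro s _ t _ hst
    have hr : (0 : ℝ) ≤ r := hr
    dsimp only
    gcongr
  · simpa using ((Real.tendsto_exp_neg_atTop_nhds_zero.comp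
      (tendsto_id.const_mul_atTop ha)).const_mul M).mul_const r

theorem tendsto_comp_exp_of_classKL {E F : Type*} [NormedAddCommGroup E] [NormedSpace ℝ E]
    [NormedAddCommGroup F] [NormedSpace ℝ F] {A : E →L[ℝ] E} {C : E →L[ℝ] F}
    {β : ℝ → ℝ → ℝ} (hβ : ClassKL β)
    (H : ∀ ξ, ∀ t : ℝ, 0 ≤ t → ‖C (NormedSpace.exp (t • A) ξ)‖ ≤ β ‖ξ‖ t) :
    Tendsto (fun t : ℝ ↦ C.comp (NormedSpace.exp (t • A))) atTop (𝓝 0) := by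
  rw [tendsto_zero_iff_norm_tendsto_zero]
  refine squeeze_zero' (.of_forall fun _ ↦ norm_nonneg _) ?_ (hβ.2 1 (mem_Ici.2 zero_le_one)).2.2
  filter_upwards [eventually_ge_atTop 0] with t ht
  exact ContinuousLinearMap.opNorm_le_of_unit_norm (hβ.nonneg zero_le_one ht)
    fun ξ hξ ↦ hξ ▸ H ξ t ht

theorem norm_integral_comp_exp_le {E F G : Type*} [NormedAddCommGroup E] [NormedSpace ℝ E]
    [NormedAddCommGroup F] [NormedSpace ℝ F] [NormedAddCommGroup G] [NormedSpace ℝ G]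
    [CompleteSpace F] {A : E →L[ℝ] E} {B : G →L[ℝ] E} {C : E →L[ℝ] F} {M a U t : ℝ}
    (hM : 0 ≤ M) (ha : 0 < a) (ht : 0 ≤ t)
    (hdecay : ∀ τ, 0 ≤ τ → ‖C.comp (NormedSpace.exp (τ • A))‖ ≤ M * Real.exp (-(a * τ)))
    {u : ℝ → G} (hu : ∀ s, ‖u s‖ ≤ U) :
    ‖∫ s in (0 : ℝ)..t, C (NormedSpace.exp ((t - s) • A) (B (u s)))‖ ≤ M * ‖B‖ * U / a := by
  have hU : 0 ≤ U := (norm_nonneg _).trans (hu 0)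
  have hpt : ∀ s ∈ Ioc 0 t, ‖C (NormedSpace.exp ((t - s) • A) (B (u s)))‖ ≤
      M * ‖B‖ * U * Real.exp (-(a * (t - s))) := fun s hs ↦
    calc ‖C (NormedSpace.exp ((t - s) • A) (B (u s)))‖
        ≤ M * Real.exp (-(a * (t - s))) * (‖B‖ * U) :=
          (C.comp _).le_of_opNorm_le_of_le (hdecay _ (by linarith [hs.2]))
            (B.le_of_opNorm_le_of_le le_rfl (hu s))
      _ = _ := by ring
  have hint : ∫ s in (0 : ℝ)..t, Real.exp (-(a * (t - s))) = (1 - Real.exp (-(a * t))) / a := by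
    rw [intervalIntegral.integral_comp_sub_left (fun s ↦ Real.exp (-(a * s))),
      sub_self, sub_zero, intervalIntegral.integral_comp_mul_left (fun s ↦ Real.exp (-s)) ha.ne',
      intervalIntegral.integral_comp_neg, integral_exp, mul_zero, neg_zero, Real.exp_zero,
      smul_eq_mul, inv_mul_eq_div]
  calc ‖∫ s in (0 : ℝ)..t, C (NormedSpace.exp ((t - s) • A) (B (u s)))‖
      ≤ ∫ s in (0 : ℝ)..t, M * ‖B‖ * U * Real.exp (-(a * (t - s))) :=
        intervalIntegral.norm_integral_le_of_norm_le ht (.of_forall hpt)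
          (Continuous.intervalIntegrable (by fun_prop) _ _)
    _ = M * ‖B‖ * U * ((1 - Real.exp (-(a * t))) / a) := by
        rw [intervalIntegral.integral_const_mul, hint]
    _ ≤ M * ‖B‖ * U * (1 / a) := by gcongr; linarith [Real.exp_pos (-(a * t))]
    _ = _ := by ring

section Inputs

variable {m : ℕ} {u : ℝ → EuclideanSpace ℝ (Fin m)}

theorem IsBddInput.norm_le_unorm (hu : IsBddInput u) (t : ℝ) : ‖u t‖ ≤ unorm u := by
  obtain ⟨K, hK⟩ := hu
  exact le_ciSup ⟨K, forall_mem_range.2 hK⟩ t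

theorem isBddInput_zero : IsBddInput (0 : ℝ → EuclideanSpace ℝ (Fin m)) := ⟨0, by simp⟩

theorem unorm_zero : unorm (0 : ℝ → EuclideanSpace ℝ (Fin m)) = 0 := by simp [unorm]

end Inputs

section LinearSystem

variable {n m p : ℕ} {A : EuclideanSpace ℝ (Fin n) →L[ℝ] EuclideanSpace ℝ (Fin n)}
  {B : EuclideanSpace ℝ (Fin m) →L[ℝ] EuclideanSpace ℝ (Fin n)}
  {C : EuclideanSpace ℝ (Fin n) →L[ℝ] EuclideanSpace ℝ (Fin p)}

theorem linOut_zero (t : ℝ) (ξ : EuclideanSpace ℝ (Fin n)) :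
    linOut A B C t ξ 0 = C (NormedSpace.exp (t • A) ξ) := by
  simp [linOut]

theorem norm_linOut_le {M a t : ℝ} (hM : 0 ≤ M) (ha : 0 < a) (ht : 0 ≤ t)
    (hdecay : ∀ τ, 0 ≤ τ → ‖C.comp (NormedSpace.exp (τ • A))‖ ≤ M * Real.exp (-(a * τ)))
    (ξ : EuclideanSpace ℝ (Fin n)) {u : ℝ → EuclideanSpace ℝ (Fin m)} (hu : IsBddInput u) :
    ‖linOut A B C t ξ u‖ ≤ M * Real.exp (-(a * t)) * ‖ξ‖ + M * ‖B‖ / a * unorm u :=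
  (norm_add_le _ _).trans <| add_le_add
    ((C.comp _).le_of_opNorm_le (hdecay t ht) ξ)
    (by simpa only [mul_div_right_comm] using
      norm_integral_comp_exp_le hM ha ht hdecay hu.norm_le_unorm)

end LinearSystem

/-- For a linear system `ẋ = Ax + Bu`, `y = Cx`, the IOS property holds (for all bounded
measurable inputs) if and only if it holds for the zero input, i.e. iff `C e^{tA} ξ`
admits a `KL` bound. -/
theorem stmt14 {n m p : ℕ}
    (A : EuclideanSpace ℝ (Fin n) →L[ℝ] EuclideanSpace ℝ (Fin n))
    (B : EuclideanSpace ℝ (Fin m) →L[ℝ] EuclideanSpace ℝ (Fin n))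
    (C : EuclideanSpace ℝ (Fin n) →L[ℝ] EuclideanSpace ℝ (Fin p)) :
    (∃ β : ℝ → ℝ → ℝ, ∃ γ : ℝ → ℝ, ClassKL β ∧ ClassK γ ∧
        ∀ ξ, ∀ u : ℝ → EuclideanSpace ℝ (Fin m), Measurable u → IsBddInput u →
          ∀ t : ℝ, 0 ≤ t → ‖linOut A B C t ξ u‖ ≤ β ‖ξ‖ t + γ (unorm u)) ↔
    (∃ β : ℝ → ℝ → ℝ, ClassKL β ∧
        ∀ ξ, ∀ t : ℝ, 0 ≤ t → ‖C (NormedSpace.exp (t • A) ξ)‖ ≤ β ‖ξ‖ t) := by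
  constructor
  · rintro ⟨β, γ, hβ, hγ, H⟩
    refine ⟨β, hβ, fun ξ t ht ↦ ?_⟩
    simpa [linOut_zero, unorm_zero, hγ.2.2] using H ξ 0 measurable_const isBddInput_zero t ht
  · rintro ⟨β, hβ, H⟩
    obtain ⟨M, a, hM, ha, hdecay⟩ := exists_norm_comp_exp_le_exp (tendsto_comp_exp_of_classKL hβ H)
    -- the `+ 1` keeps `γ` strictly increasing when `B = 0`
    refine ⟨fun r t ↦ M * Real.exp (-(a * t)) * r, ((M * ‖B‖ / a + 1) * ·), classKL_mul_exp hM ha,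
      classK_const_mul (by positivity), fun ξ u _ hu t ht ↦ ?_⟩
    have hU : 0 ≤ unorm u := (norm_nonneg _).trans (hu.norm_le_unorm 0)
    calc ‖linOut A B C t ξ u‖ ≤ M * Real.exp (-(a * t)) * ‖ξ‖ + M * ‖B‖ / a * unorm u :=
          norm_linOut_le hM.le ha ht hdecay ξ hu
      _ ≤ _ := by dsimp only; gcongr; linarith
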